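/- Let I be a two-valued interpretation of an extended logic program P. Then an objective literal L is in Γ_s(I) (the Γ operator of the semi-normal program P_s) if and only if there exists an argument A with conclusion L such that assm(A) ⊆ I and no explicit negation of a conclusion of A is in I (¬conc(A) ∩ I = ∅). -/

import Mathlib

/-- Objective literals: atoms and their explicit negations. -/
inductive Lit : Type where
  | pos : String → Lit
  | neg : String → Lit
deriving DecidableEq

/-- Explicit negation of an objective literal (`¬¬L = L`). -/
def Lit.compl : Lit → Lit
  | .pos a => .neg a
  | .neg a => .pos a

/-- A rule `head ← pos, not neg` of an extended logic program:
`pos` are the objective body literals and `neg` the default-negated ones. -/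
structure Rule where
  head : Lit
  pos : List Lit
  neg : List Lit

/-- An extended logic program is a set of rules. -/
abbrev Program := Set Rule

/-- An argument for `P`: a finite sequence of rules of `P` such that every
objective literal in the body of a rule is the head of a later rule. -/
def IsArg (P : Program) (A : List Rule) : Prop :=
  (∀ r ∈ A, r ∈ P) ∧
  ∀ i : Fin A.length, ∀ L ∈ (A.get i).pos,
    ∃ k : Fin A.length, i < k ∧ (A.get k).head = L

/-- The conclusions of an argument: the heads of its rules. -/
def conc (A : List Rule) : Set Lit := {L | ∃ r ∈ A, r.head = L}

/-- The assumptions of an argument: the objective literals `L` such that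
`not L` occurs in the body of one of its rules. -/
def assm (A : List Rule) : Set Lit := {L | ∃ r ∈ A, L ∈ r.neg}

/-- `A` is a minimal argument for `L`: no proper subargument of `A` has
conclusion `L`. -/
def MinimalForArg (P : Program) (A : List Rule) (L : Lit) : Prop :=
  IsArg P A ∧ L ∈ conc A ∧
  ∀ B : List Rule, B.Sublist A → B ≠ A → IsArg P B → L ∉ conc B

/-- The set of minimal arguments of `P`. -/
def Args (P : Program) : Type := {A : List Rule // ∃ L, MinimalForArg P A L}

/-- `A` undercuts `B`: some conclusion `L` of `A` is an assumption `not L` of `B`. -/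
def undercuts {P : Program} (A B : Args P) : Prop :=
  ∃ L, L ∈ conc A.1 ∧ L ∈ assm B.1

/-- `A` rebuts `B`: some conclusion `L` of `A` has `¬L` a conclusion of `B`. -/
def rebuts {P : Program} (A B : Args P) : Prop :=
  ∃ L, L ∈ conc A.1 ∧ L.compl ∈ conc B.1

/-- `A` attacks `B` iff `A` undercuts or rebuts `B`. -/
def attacks {P : Program} (A B : Args P) : Prop := undercuts A B ∨ rebuts A B

/-- `A` defeats `B` iff `A` undercuts `B`, or `A` rebuts `B` and `B` does not
undercut `A`. -/
def defeats {P : Program} (A B : Args P) : Prop :=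
  undercuts A B ∨ (rebuts A B ∧ ¬ undercuts B A)

/-- `A` strongly undercuts `B` iff `A` undercuts `B` and `B` does not undercut `A`. -/
def sundercuts {P : Program} (A B : Args P) : Prop :=
  undercuts A B ∧ ¬ undercuts B A

/-- The set of `x/y`-acceptable arguments with respect to `S`. -/
def Facc {Arg : Type*} (x y : Arg → Arg → Prop) (S : Set Arg) : Set Arg :=
  {A | ∀ B, x B A → ∃ C ∈ S, y C B}

theorem Facc_mono {Arg : Type*} (x y : Arg → Arg → Prop) : Monotone (Facc x y) := by
  intro S T hST A hA B hB
  obtain ⟨C, hC, hCB⟩ := hA B hB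
  exact ⟨C, hST hC, hCB⟩

/-- `Facc` as an order homomorphism. -/
def Fhom {Arg : Type*} (x y : Arg → Arg → Prop) : Set Arg →o Set Arg :=
  ⟨Facc x y, Facc_mono x y⟩

/-- The set of `x/y`-justified arguments. -/
def Jlfp {Arg : Type*} (x y : Arg → Arg → Prop) : Set Arg :=
  OrderHom.lfp (Fhom x y)

/-- Derivability in the least model of the GL-transformation `P/I`:
rules whose default-negated body literals avoid `I` may fire. -/
inductive GammaDeriv (P : Program) (I : Set Lit) : Lit → Prop where
  | step (r : Rule) (hr : r ∈ P) (hneg : ∀ L ∈ r.neg, L ∉ I)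
      (hpos : ∀ L ∈ r.pos, GammaDeriv P I L) : GammaDeriv P I r.head

/-- The Gelfond–Lifschitz operator `Γ_P`. -/
def Gamma (P : Program) (I : Set Lit) : Set Lit := {L | GammaDeriv P I L}

/-- The semi-normal version of `P`: each rule `L ← Body` becomes
`L ← not ¬L, Body`. -/
def seminormal (P : Program) : Program :=
  {r' | ∃ r ∈ P, r' = ⟨r.head, r.pos, r.head.compl :: r.neg⟩}

/-- `Γ_s`, the `Γ` operator of the semi-normal program. -/
def GammaS (P : Program) (I : Set Lit) : Set Lit := Gamma (seminormal P) I

theorem Gamma_anti (P : Program) : ∀ {I I' : Set Lit}, I ⊆ I' → Gamma P I' ⊆ Gamma P I := by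
  intro I I' h L hL
  induction hL with
  | step r hr hneg hpos ih =>
      exact GammaDeriv.step r hr (fun L hL hI => hneg L hL (h hI)) ih

/-- The monotone operator `I ↦ Γ_P (Γ_Q I)`. -/
def GammaComp (P Q : Program) : Set Lit →o Set Lit :=
  ⟨fun I => Gamma P (Gamma Q I), fun _ _ h => Gamma_anti P (Gamma_anti Q h)⟩

/-!
A rule `L ← Body` of `P` becomes, in the semi-normal program reduced by `I`, a rule that may fire
exactly when `¬L` and the default-negated literals of `Body` lie outside `I`. An argument is a
derivation written top-down: every positive body literal is the head of a later rule. Reading an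
argument from its last rule backwards therefore derives all its conclusions in `P_s / I`; conversely,
a derivation of `L` in `P_s / I` flattens into an argument by placing its last rule in front of the
concatenated arguments for the premises, and concatenation preserves being an argument.
-/

@[simp] lemma conc_nil : conc [] = ∅ := by
  ext; simp [conc]

@[simp] lemma conc_cons (r : Rule) (A : List Rule) : conc (r :: A) = insert r.head (conc A) := by
  ext; simp [conc, eq_comm]

@[simp] lemma conc_append (A B : List Rule) : conc (A ++ B) = conc A ∪ conc B := by
  ext; simp [conc, or_and_right, exists_or]

@[simp] lemma assm_nil : assm [] = ∅ := by
  ext; simp [assm]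

@[simp] lemma assm_cons (r : Rule) (A : List Rule) :
    assm (r :: A) = {L | L ∈ r.neg} ∪ assm A := by
  ext; simp [assm]

@[simp] lemma assm_append (A B : List Rule) : assm (A ++ B) = assm A ∪ assm B := by
  ext; simp [assm, or_and_right, exists_or]

section
variable {P : Program} {I : Set Lit}

lemma isArg_nil : IsArg P [] :=
  ⟨by simp, fun i => i.elim0⟩

lemma isArg_cons_iff {r : Rule} {A : List Rule} :
    IsArg P (r :: A) ↔ r ∈ P ∧ (∀ L ∈ r.pos, L ∈ conc A) ∧ IsArg P A := by
  have mem_conc : ∀ L, L ∈ conc A ↔ ∃ k : Fin A.length, (A.get k).head = L := by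
    simp [conc, List.mem_iff_get]
  simp only [IsArg, List.mem_cons, forall_eq_or_imp, Fin.forall_fin_succ, Fin.exists_fin_succ,
    mem_conc, List.get_eq_getElem, List.length_cons, Fin.coe_ofNat_eq_mod, Nat.zero_mod,
    List.getElem_cons_zero, false_and, Fin.succ_pos, Fin.val_succ,
    List.getElem_cons_succ, true_and, false_or, not_lt_zero, Fin.succ_lt_succ_iff]
  tauto

lemma IsArg.append {A B : List Rule} (hA : IsArg P A) (hB : IsArg P B) : IsArg P (A ++ B) := by
  induction A with
  | nil => exact hB
  | cons r A ih =>
    obtain ⟨hr, hpos, hA⟩ := isArg_cons_iff.1 hA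
    rw [List.cons_append, isArg_cons_iff, conc_append]
    exact ⟨hr, fun L hL => Or.inl (hpos L hL), ih hA⟩

def IsCompatibleArg (P : Program) (I : Set Lit) (A : List Rule) : Prop :=
  IsArg P A ∧ (∀ L ∈ assm A, L ∉ I) ∧ ∀ L ∈ conc A, L.compl ∉ I

lemma isCompatibleArg_nil : IsCompatibleArg P I [] :=
  ⟨isArg_nil, by simp, by simp⟩

/-- The first conjunct says that the semi-normal version of `r` fires in `P_s / I` once the
conclusions of `A` are derived. -/
lemma isCompatibleArg_cons_iff {r : Rule} {A : List Rule} :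
    IsCompatibleArg P I (r :: A) ↔
      (r ∈ P ∧ (∀ L ∈ r.pos, L ∈ conc A) ∧ r.head.compl ∉ I ∧ ∀ L ∈ r.neg, L ∉ I) ∧
        IsCompatibleArg P I A := by
  simp only [IsCompatibleArg, isArg_cons_iff, assm_cons, conc_cons, Set.mem_union,
    Set.mem_ofPred_eq, Set.mem_insert_iff, or_imp, forall_and, forall_eq]
  tauto

lemma IsCompatibleArg.append {A B : List Rule} (hA : IsCompatibleArg P I A)
    (hB : IsCompatibleArg P I B) : IsCompatibleArg P I (A ++ B) := by
  obtain ⟨hA, hassmA, hconcA⟩ := hA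
  obtain ⟨hB, hassmB, hconcB⟩ := hB
  refine ⟨hA.append hB, fun L hL => ?_, fun L hL => ?_⟩
  · rcases (assm_append A B ▸ hL : L ∈ assm A ∪ assm B) with hL | hL
    exacts [hassmA L hL, hassmB L hL]
  · rcases (conc_append A B ▸ hL : L ∈ conc A ∪ conc B) with hL | hL
    exacts [hconcA L hL, hconcB L hL]

lemma exists_isCompatibleArg_forall_mem_conc (Ls : List Lit)
    (h : ∀ L ∈ Ls, ∃ A, IsCompatibleArg P I A ∧ L ∈ conc A) :
    ∃ A, IsCompatibleArg P I A ∧ ∀ L ∈ Ls, L ∈ conc A := by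
  induction Ls with
  | nil => exact ⟨[], isCompatibleArg_nil, by simp⟩
  | cons L Ls ih =>
    obtain ⟨⟨A, hA, hL⟩, hs⟩ := List.forall_mem_cons.1 h
    obtain ⟨B, hB, hLs⟩ := ih hs
    refine ⟨A ++ B, hA.append hB, ?_⟩
    simp only [List.forall_mem_cons, conc_append, Set.mem_union]
    exact ⟨Or.inl hL, fun L' hL' => Or.inr (hLs L' hL')⟩

lemma exists_isCompatibleArg_of_mem_gammaS {L : Lit} (h : L ∈ GammaS P I) :
    ∃ A, IsCompatibleArg P I A ∧ L ∈ conc A := by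
  induction h with
  | step r' hr' hneg _ ih =>
    obtain ⟨r, hr, rfl⟩ := hr'
    obtain ⟨hhead, hneg⟩ := List.forall_mem_cons.1 hneg
    obtain ⟨B, hB, hpos⟩ := exists_isCompatibleArg_forall_mem_conc r.pos ih
    exact ⟨r :: B, isCompatibleArg_cons_iff.2 ⟨⟨hr, hpos, hhead, hneg⟩, hB⟩,
      ⟨r, List.mem_cons_self, rfl⟩⟩

lemma IsCompatibleArg.conc_subset_gammaS {A : List Rule} (hA : IsCompatibleArg P I A) :
    conc A ⊆ GammaS P I := by
  induction A with
  | nil => simp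
  | cons r A ih =>
    obtain ⟨⟨hr, hpos, hhead, hneg⟩, hA⟩ := isCompatibleArg_cons_iff.1 hA
    rw [conc_cons]
    refine Set.insert_subset_iff.2 ⟨?_, ih hA⟩
    exact GammaDeriv.step ⟨r.head, r.pos, r.head.compl :: r.neg⟩ ⟨r, hr, rfl⟩
      (List.forall_mem_cons.2 ⟨hhead, hneg⟩) fun L hL => ih hA (hpos L hL)

end

/-- For a two-valued interpretation (given by its set `I` of true objective
literals), `L ∈ Γ_s(I)` iff there is an argument for `L` whose assumptions all
hold in the interpretation and none of whose conclusions has its explicit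
negation in `I`. -/
theorem gammaS_iff_argument (P : Program) (I : Set Lit) (L : Lit) :
    L ∈ GammaS P I ↔
      ∃ A : List Rule, IsArg P A ∧ L ∈ conc A ∧
        (∀ L' ∈ assm A, L' ∉ I) ∧ (∀ L' ∈ conc A, L'.compl ∉ I) := by
  constructor
  · intro h
    obtain ⟨A, ⟨hA, hassm, hconc⟩, hL⟩ := exists_isCompatibleArg_of_mem_gammaS h
    exact ⟨A, hA, hL, hassm, hconc⟩
  · rintro ⟨A, hA, hL, hassm, hconc⟩
    exact IsCompatibleArg.conc_subset_gammaS ⟨hA, hassm, hconc⟩ hL
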